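/- Let c > 1, X ≥ 2, Δ = X^{1/4 − c}, and I(t) = ∫_{X/2}^{X} e(t·y^c) dy. Then ∫_{−Δ}^{Δ} |I(t)|² dt ≪ X^{2−c}·log X. -/

import Mathlib

/-!
Trivially `‖I(t)‖ ≤ X/2`. For `t ≠ 0`, integrating by parts against `g = 1/φ'` with phase
`φ(y) = t y^c` (the first-derivative test) gives `|t| ‖I(t)‖ ≤ (X/2)^(1-c)/(πc)`. A function with
`‖F t‖ ≤ a` and `|t| ‖F t‖ ≤ b` satisfies `‖F t‖² ≤ 2a²/(1 + (at/b)²)`, a majorant with integral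
`2πab` over all of `ℝ`, so the integral of `‖I‖²` over any set is `O(X^(2-c))`.
-/

open Real Complex MeasureTheory

/-- `e(u) = exp(2πiu)`. -/
noncomputable def e (u : ℝ) : ℂ := Complex.exp (2 * Real.pi * Complex.I * u)

theorem norm_e (u : ℝ) : ‖e u‖ = 1 := by
  rw [e, ← Complex.ofReal_ofNat, mul_comm _ I, mul_assoc, ← Complex.ofReal_mul,
    ← Complex.ofReal_mul, mul_comm I, Complex.norm_exp_ofReal_mul_I]

theorem continuous_e : Continuous e := by
  unfold e; fun_prop

theorem HasDerivAt.e_comp {φ : ℝ → ℝ} {φ' y : ℝ} (hφ : HasDerivAt φ φ' y) :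
    HasDerivAt (fun y => e (φ y)) (2 * π * I * φ' * e (φ y)) y := by
  have := (hφ.ofReal_comp.const_mul (2 * π * I : ℂ)).cexp
  simpa only [e, mul_comm (Complex.exp _), mul_assoc] using this

theorem norm_integral_e_le_abs_sub (φ : ℝ → ℝ) (a b : ℝ) :
    ‖∫ y in a..b, e (φ y)‖ ≤ |b - a| := by
  simpa using intervalIntegral.norm_integral_le_of_norm_le_const (C := 1) (f := fun y => e (φ y))
    fun y _ => (norm_e _).le

theorem two_pi_mul_norm_integral_e_le {φ φ' g g' : ℝ → ℝ} {a b : ℝ} (hab : a ≤ b)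
    (hφ : ∀ y ∈ Set.uIcc a b, HasDerivAt φ (φ' y) y)
    (hg : ∀ y ∈ Set.uIcc a b, HasDerivAt g (g' y) y) (hg' : IntervalIntegrable g' volume a b)
    (hgφ : ∀ y ∈ Set.uIcc a b, g y * φ' y = 1) :
    2 * π * ‖∫ y in a..b, e (φ y)‖ ≤ |g a| + |g b| + ∫ y in a..b, |g' y| := by
  have he : ContinuousOn (fun y => e (φ y)) (Set.uIcc a b) := continuous_e.comp_continuousOn
    fun y hy => (hφ y hy).continuousAt.continuousWithinAt
  have hint : IntervalIntegrable (fun y => (g' y : ℂ) * e (φ y)) volume a b :=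
    IntervalIntegrable.mul_continuousOn ⟨hg'.1.ofReal, hg'.2.ofReal⟩ he
  have hderiv : ∀ y ∈ Set.uIcc a b, HasDerivAt (fun y => (g y : ℂ) * e (φ y))
      ((g' y : ℂ) * e (φ y) + 2 * π * I * e (φ y)) y := by
    intro y hy
    have h1 : (g y : ℂ) * φ' y = 1 := by exact_mod_cast hgφ y hy
    refine ((hg y hy).ofReal_comp.mul (hφ y hy).e_comp).congr_deriv ?_
    linear_combination (2 * π * I * e (φ y) : ℂ) * h1
  have hparts := intervalIntegral.integral_eq_sub_of_hasDerivAt hderiv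
    (hint.add ((he.intervalIntegrable).const_mul _))
  rw [intervalIntegral.integral_add hint ((he.intervalIntegrable).const_mul _),
    intervalIntegral.integral_const_mul] at hparts
  have hnorm : ‖(2 * π * I : ℂ)‖ = 2 * π := by simp [abs_of_pos pi_pos]
  calc 2 * π * ‖∫ y in a..b, e (φ y)‖ = ‖(g b : ℂ) * e (φ b) - g a * e (φ a)
        - ∫ y in a..b, (g' y : ℂ) * e (φ y)‖ := by
        rw [← hnorm, ← norm_mul, ← hparts]; ring_nf
    _ ≤ ‖(g b : ℂ) * e (φ b)‖ + ‖(g a : ℂ) * e (φ a)‖ + ‖∫ y in a..b, (g' y : ℂ) * e (φ y)‖ :=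
        (norm_sub_le _ _).trans (add_le_add_left (norm_sub_le _ _) _)
    _ ≤ |g b| + |g a| + ∫ y in a..b, ‖(g' y : ℂ) * e (φ y)‖ := by
        gcongr
        · simp [norm_e]
        · simp [norm_e]
        · exact intervalIntegral.norm_integral_le_integral_norm hab
    _ = |g a| + |g b| + ∫ y in a..b, |g' y| := by simp [norm_e, add_comm]

theorem integral_sub_one_mul_rpow_neg (c : ℝ) {a b : ℝ} (ha : 0 < a) (hab : a ≤ b) :
    ∫ y in a..b, (c - 1) * y ^ (-c) = a ^ (1 - c) - b ^ (1 - c) := by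
  have hpos : ∀ y ∈ Set.uIcc a b, 0 < y := fun y hy => by
    rw [Set.uIcc_of_le hab] at hy; exact ha.trans_le hy.1
  rw [intervalIntegral.integral_eq_sub_of_hasDerivAt (f := fun y => -y ^ (1 - c))
    (fun y hy => ?_) (ContinuousOn.intervalIntegrable fun y hy => ?_)]
  · ring
  · exact (hasDerivAt_rpow_const (Or.inl (hpos y hy).ne')).neg.congr_deriv
      (by rw [sub_sub_cancel_left]; ring)
  · exact ((continuousAt_rpow_const _ _ (Or.inl (hpos y hy).ne')).const_mul _).continuousWithinAt

theorem abs_mul_norm_integral_e_mul_rpow_le {c : ℝ} (hc : 1 ≤ c) {a b : ℝ} (ha : 0 < a)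
    (hab : a ≤ b) (t : ℝ) : |t| * ‖∫ y in a..b, e (t * y ^ c)‖ ≤ a ^ (1 - c) / (π * c) := by
  rcases eq_or_ne t 0 with rfl | ht
  · simp only [abs_zero, zero_mul]; positivity
  have hc0 : 0 < c := by linarith
  have hpos : ∀ y ∈ Set.uIcc a b, 0 < y := fun y hy => by
    rw [Set.uIcc_of_le hab] at hy; exact ha.trans_le hy.1
  have hrpow : ∀ y ∈ Set.uIcc a b, ∀ p : ℝ, HasDerivAt (fun y => y ^ p) (p * y ^ (p - 1)) y :=
    fun y hy p => hasDerivAt_rpow_const (Or.inl (hpos y hy).ne')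
  have hg' : ContinuousOn (fun y => (1 - c) * y ^ (-c) / (t * c)) (Set.uIcc a b) := fun y hy =>
    ((continuousAt_rpow_const _ _ (Or.inl (hpos y hy).ne')).const_mul _
      |>.div_const _).continuousWithinAt
  have hgφ : ∀ y ∈ Set.uIcc a b, y ^ (1 - c) / (t * c) * (t * (c * y ^ (c - 1))) = 1 :=
    fun y hy => by
      rw [div_mul_eq_mul_div, div_eq_one_iff_eq (mul_ne_zero ht hc0.ne')]
      calc y ^ (1 - c) * (t * (c * y ^ (c - 1))) = t * c * (y ^ (1 - c) * y ^ (c - 1)) := by ring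
        _ = t * c := by rw [← rpow_add (hpos y hy)]; norm_num
  have hparts := two_pi_mul_norm_integral_e_le hab (φ := fun y => t * y ^ c)
    (fun y hy => (hrpow y hy c).const_mul t)
    (fun y hy => by simpa using (hrpow y hy (1 - c)).div_const (t * c))
    hg'.intervalIntegrable hgφ
  have habs : ∀ y ∈ Set.uIcc a b, |y ^ (1 - c) / (t * c)| = y ^ (1 - c) / (|t| * c) :=
    fun y hy => by rw [abs_div, abs_mul, abs_of_pos (rpow_pos_of_pos (hpos y hy) _), abs_of_pos hc0]
  have habs' : ∀ y ∈ Set.uIcc a b,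
      |(1 - c) * y ^ (-c) / (t * c)| = (c - 1) * y ^ (-c) / (|t| * c) := fun y hy => by
    rw [abs_div, abs_mul, abs_mul, abs_of_nonpos (by linarith : 1 - c ≤ 0),
      abs_of_pos (rpow_pos_of_pos (hpos y hy) _), abs_of_pos hc0, neg_sub]
  rw [habs a Set.left_mem_uIcc, habs b Set.right_mem_uIcc, intervalIntegral.integral_congr habs',
    intervalIntegral.integral_div, integral_sub_one_mul_rpow_neg c ha hab] at hparts
  -- `1/φ'` is monotone, so the integral of `|(1/φ')'|` telescopes against the boundary terms.
  have h2 : 2 * π * ‖∫ y in a..b, e (t * y ^ c)‖ ≤ 2 * a ^ (1 - c) / (|t| * c) :=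
    hparts.trans_eq (by ring)
  calc |t| * ‖∫ y in a..b, e (t * y ^ c)‖
      = |t| * (2 * π * ‖∫ y in a..b, e (t * y ^ c)‖) / (2 * π) := by field_simp
    _ ≤ |t| * (2 * a ^ (1 - c) / (|t| * c)) / (2 * π) := by gcongr
    _ = a ^ (1 - c) / (π * c) := by field_simp

theorem sq_mul_one_add_sq_le {x t a b : ℝ} (hb : 0 < b) (hx : 0 ≤ x) (h₁ : x ≤ a)
    (h₂ : |t| * x ≤ b) : x ^ 2 * (1 + (a * t / b) ^ 2) ≤ 2 * a ^ 2 := by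
  have hx2 : x ^ 2 ≤ a ^ 2 := pow_le_pow_left₀ hx h₁ 2
  have htx : (t * x) ^ 2 ≤ b ^ 2 := by
    rw [← sq_abs, abs_mul, abs_of_nonneg hx]
    exact pow_le_pow_left₀ (by positivity) h₂ 2
  calc x ^ 2 * (1 + (a * t / b) ^ 2) = x ^ 2 + a ^ 2 * (t * x) ^ 2 / b ^ 2 := by
        field_simp
    _ ≤ a ^ 2 + a ^ 2 * b ^ 2 / b ^ 2 := by gcongr
    _ = 2 * a ^ 2 := by field_simp; ring

theorem integral_inv_one_add_sq_mul_div {a b : ℝ} (ha : 0 < a) (hb : 0 < b) :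
    ∫ t, (1 + (a * t / b) ^ 2)⁻¹ = π * b / a := by
  have := Measure.integral_comp_mul_left (fun t : ℝ => (1 + t ^ 2)⁻¹) (a / b)
  simp only [integral_univ_inv_one_add_sq, smul_eq_mul] at this
  rw [show (fun t => (1 + (a * t / b) ^ 2)⁻¹) = fun t => (1 + (a / b * t) ^ 2)⁻¹ by
    ext t; ring_nf, this, abs_of_pos (by positivity)]
  field_simp

theorem setIntegral_norm_sq_le_of_abs_mul_norm_le {E : Type*} [NormedAddCommGroup E]
    {F : ℝ → E} {a b : ℝ} (ha : 0 < a) (hb : 0 < b) (h₁ : ∀ t, ‖F t‖ ≤ a)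
    (h₂ : ∀ t, |t| * ‖F t‖ ≤ b) (s : Set ℝ) :
    ∫ t in s, ‖F t‖ ^ 2 ≤ 2 * π * a * b := by
  set g : ℝ → ℝ := fun t => 2 * a ^ 2 * (1 + (a * t / b) ^ 2)⁻¹
  have hg : Integrable g :=
    ((integrable_inv_one_add_sq.comp_mul_left' (div_ne_zero ha.ne' hb.ne')).const_mul
      (2 * a ^ 2)).congr (.of_forall fun t => by simp only [g]; ring_nf)
  have hFg : ∀ t, ‖F t‖ ^ 2 ≤ g t := fun t =>
    (le_mul_inv_iff₀ (by positivity)).2 (sq_mul_one_add_sq_le hb (norm_nonneg _) (h₁ t) (h₂ t))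
  calc ∫ t in s, ‖F t‖ ^ 2 ≤ ∫ t in s, g t :=
        integral_mono_of_nonneg (.of_forall fun t => by positivity) hg.integrableOn (.of_forall hFg)
    _ ≤ ∫ t, g t := setIntegral_le_integral hg (.of_forall fun t => by positivity)
    _ = 2 * π * a * b := by
        rw [integral_const_mul, integral_inv_one_add_sq_mul_div ha hb]
        field_simp

/-- With `Δ = X^{1/4-c}` and `I(t) = ∫_{X/2}^X e(t y^c) dy`,
`∫_{-Δ}^{Δ} |I(t)|² dt ≪ X^{2-c} log X`. -/
theorem integral_I_sq_bound (c : ℝ) (hc : 1 < c) :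
    ∃ C > 0, ∀ X : ℝ, 2 ≤ X →
      (∫ t in Set.Icc (-(X ^ ((1 : ℝ) / 4 - c))) (X ^ ((1 : ℝ) / 4 - c)),
          ‖∫ y in (X / 2)..X, e (t * y ^ c)‖ ^ 2) ≤
        C * X ^ (2 - c) * Real.log X := by
  refine ⟨2 / (c * 2 ^ (2 - c) * Real.log 2), by positivity, fun X hX => ?_⟩
  have hX : 0 < X / 2 := by linarith
  calc _ ≤ 2 * π * (X / 2) * ((X / 2) ^ (1 - c) / (π * c)) :=
        setIntegral_norm_sq_le_of_abs_mul_norm_le hX (by positivity)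
          (fun t => (norm_integral_e_le_abs_sub _ _ _).trans_eq (by rw [abs_of_pos] <;> linarith))
          (abs_mul_norm_integral_e_mul_rpow_le hc.le hX (by linarith)) _
    _ = 2 / c * (X / 2) ^ (2 - c) := by
        rw [show 2 - c = 1 + (1 - c) by ring, rpow_add hX, rpow_one]; field_simp
    _ = 2 / (c * 2 ^ (2 - c) * Real.log 2) * X ^ (2 - c) * Real.log 2 := by
        rw [div_rpow (by linarith) zero_le_two]; field_simp
    _ ≤ 2 / (c * 2 ^ (2 - c) * Real.log 2) * X ^ (2 - c) * Real.log X := by gcongr
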